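/- arXiv:2405.07007 — 4 statements merged into one kernel-verified Lean document; each statement's English description precedes it below -/
import Mathlib

section
/- For an invertible matrix M of size n over F_q, the branch number B(M) = min_{x ≠ 0} (w(x) + w(Mx)) equals the minimum over all nonzero x with 1 ≤ w(x) ≤ ⌊(n+1)/2⌋ of min(w(x) + w(Mx), w(x) + w(M⁻¹x)). -/
/-!
Both sides only see the numbers `w(y) + w(My)`, `y ≠ 0`, and `w(x) + w(Mx)` is the same number
as `w(y) + w(M⁻¹y)` for `y = Mx`. So a nonzero `x` is dominated by a witness of the right-hand
side as soon as `x` or `Mx` has weight at most `⌊(n+1)/2⌋`. If neither has, then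
`w(x) + w(Mx) ≥ 2⌊(n+1)/2⌋ + 2 ≥ n + 2`, while every vector `e` of weight one already gives
`w(e) + w(Me) ≤ n + 1`.
-/

open Matrix

theorem Nat.sInf_eq_sInf_of_forall_exists_le {S T : Set ℕ}
    (hST : ∀ a ∈ S, ∃ b ∈ T, b ≤ a) (hTS : ∀ b ∈ T, ∃ a ∈ S, a ≤ b) : sInf S = sInf T := by
  have key : ∀ {S T : Set ℕ}, (∀ a ∈ S, ∃ b ∈ T, b ≤ a) →
      (∀ b ∈ T, ∃ a ∈ S, a ≤ b) → sInf T ≤ sInf S := by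
    intro S T hST hTS
    rcases S.eq_empty_or_nonempty with rfl | hS
    · have hT : T = ∅ := Set.eq_empty_of_forall_notMem fun b hb => by
        obtain ⟨a, ha, -⟩ := hTS b hb
        exact ha
      simp [hT]
    · obtain ⟨b, hb, hle⟩ := hST _ (Nat.sInf_mem hS)
      exact (Nat.sInf_le hb).trans hle
  exact le_antisymm (key hTS hST) (key hST hTS)

section

variable {ι R : Type*} [Fintype ι] [DecidableEq ι]

theorem hammingNorm_pi_single [Zero R] [DecidableEq R] (i : ι) {a : R} (ha : a ≠ 0) :
    hammingNorm (Pi.single i a : ι → R) = 1 := by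
  simp [hammingNorm, Pi.single_apply, ha, Finset.filter_eq']

theorem exists_hammingNorm_eq_one [Zero R] [DecidableEq R] {x : ι → R} (hx : x ≠ 0) :
    ∃ e : ι → R, hammingNorm e = 1 := by
  obtain ⟨i, hi⟩ := Function.ne_iff.mp hx
  exact ⟨Pi.single i (x i), hammingNorm_pi_single i hi⟩

variable [CommRing R] {M : Matrix ι ι R}

theorem Matrix.inv_mulVec_mulVec (hM : IsUnit M) (x : ι → R) : M⁻¹ *ᵥ (M *ᵥ x) = x := by
  rw [mulVec_mulVec, nonsing_inv_mul M ((isUnit_iff_isUnit_det M).mp hM), one_mulVec]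

theorem Matrix.mulVec_inv_mulVec (hM : IsUnit M) (x : ι → R) : M *ᵥ (M⁻¹ *ᵥ x) = x := by
  rw [mulVec_mulVec, mul_nonsing_inv M ((isUnit_iff_isUnit_det M).mp hM), one_mulVec]

theorem Matrix.mulVec_ne_zero_of_isUnit (hM : IsUnit M) {x : ι → R} (hx : x ≠ 0) :
    M *ᵥ x ≠ 0 := fun h => hx (by rw [← inv_mulVec_mulVec hM x, h, mulVec_zero])

theorem Matrix.inv_mulVec_ne_zero_of_isUnit (hM : IsUnit M) {x : ι → R} (hx : x ≠ 0) :
    M⁻¹ *ᵥ x ≠ 0 := fun h => hx (by rw [← mulVec_inv_mulVec hM x, h, mulVec_zero])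

end

section

variable {ι R : Type*} [Fintype ι] [CommRing R] [DecidableEq R]

/-- `w(x) + w(Mx)`, the quantity minimised by the branch number of `M`. -/
def branchWeight (M : Matrix ι ι R) (x : ι → R) : ℕ := hammingNorm x + hammingNorm (M *ᵥ x)

theorem branchWeight_le_card_add_one (M : Matrix ι ι R) {e : ι → R} (he : hammingNorm e = 1) :
    branchWeight M e ≤ Fintype.card ι + 1 := by
  rw [branchWeight, he, add_comm]
  exact Nat.add_le_add_right hammingNorm_le_card_fintype 1

variable [DecidableEq ι] {M : Matrix ι ι R}

theorem branchWeight_inv_mulVec (hM : IsUnit M) (x : ι → R) :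
    branchWeight M⁻¹ (M *ᵥ x) = branchWeight M x := by
  rw [branchWeight, branchWeight, inv_mulVec_mulVec hM, add_comm]

theorem branchWeight_mulVec_inv (hM : IsUnit M) (x : ι → R) :
    branchWeight M (M⁻¹ *ᵥ x) = branchWeight M⁻¹ x := by
  rw [branchWeight, branchWeight, mulVec_inv_mulVec hM, add_comm]

theorem exists_branchWeight_eq_min (hM : IsUnit M) {x : ι → R} (hx : x ≠ 0) :
    ∃ y ≠ 0, branchWeight M y = min (branchWeight M x) (branchWeight M⁻¹ x) := by
  rcases min_choice (branchWeight M x) (branchWeight M⁻¹ x) with h | h <;> rw [h]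
  · exact ⟨x, hx, rfl⟩
  · exact ⟨M⁻¹ *ᵥ x, inv_mulVec_ne_zero_of_isUnit hM hx, branchWeight_mulVec_inv hM x⟩

theorem exists_low_weight_min_branchWeight_le (hM : IsUnit M) {x : ι → R} (hx : x ≠ 0) :
    ∃ y ≠ 0, 1 ≤ hammingNorm y ∧ hammingNorm y ≤ (Fintype.card ι + 1) / 2 ∧
      min (branchWeight M y) (branchWeight M⁻¹ y) ≤ branchWeight M x := by
  have one_le {y : ι → R} (hy : y ≠ 0) : 1 ≤ hammingNorm y := hammingNorm_pos_iff.mpr hy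
  have hxn : hammingNorm x ≤ Fintype.card ι := hammingNorm_le_card_fintype
  by_cases hxw : hammingNorm x ≤ (Fintype.card ι + 1) / 2
  · exact ⟨x, hx, one_le hx, hxw, min_le_left _ _⟩
  have hMx := mulVec_ne_zero_of_isUnit hM hx
  by_cases hMxw : hammingNorm (M *ᵥ x) ≤ (Fintype.card ι + 1) / 2
  · exact ⟨M *ᵥ x, hMx, one_le hMx, hMxw,
      (min_le_right _ _).trans_eq (branchWeight_inv_mulVec hM x)⟩
  obtain ⟨e, he⟩ := exists_hammingNorm_eq_one hx
  have he0 : e ≠ 0 := hammingNorm_ne_zero_iff.mp (by omega)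
  refine ⟨e, he0, he.ge, by omega, (min_le_left _ _).trans ?_⟩
  have hMe := branchWeight_le_card_add_one M he
  unfold branchWeight at hMe ⊢
  omega

end

theorem branch_number_half_weight_general (n : ℕ) (F : Type*) [Field F]
    [DecidableEq F] (M : Matrix (Fin n) (Fin n) F) (hM : IsUnit M) :
    sInf {k : ℕ | ∃ x : Fin n → F, x ≠ 0 ∧
        k = hammingNorm x + hammingNorm (M.mulVec x)} =
    sInf {k : ℕ | ∃ x : Fin n → F, x ≠ 0 ∧ 1 ≤ hammingNorm x ∧
        hammingNorm x ≤ (n + 1) / 2 ∧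
        k = min (hammingNorm x + hammingNorm (M.mulVec x))
                (hammingNorm x + hammingNorm (M⁻¹.mulVec x))} := by
  apply Nat.sInf_eq_sInf_of_forall_exists_le
  · rintro _ ⟨x, hx, rfl⟩
    obtain ⟨y, hy, hy₁, hyh, hle⟩ := exists_low_weight_min_branchWeight_le hM hx
    exact ⟨_, ⟨y, hy, hy₁, by simpa using hyh, rfl⟩, hle⟩
  · rintro _ ⟨x, hx, -, -, rfl⟩
    obtain ⟨y, hy, heq⟩ := exists_branchWeight_eq_min hM hx
    exact ⟨_, ⟨y, hy, rfl⟩, heq.le⟩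

/-- The branch number of an invertible matrix equals the minimum over nonzero vectors
of weight at most `⌊(n+1)/2⌋` of `min(w(x)+w(Mx), w(x)+w(M⁻¹x))`. -/
theorem branch_number_half_weight (n : ℕ) (hn : 1 ≤ n) (F : Type*) [Field F] [Fintype F]
    [DecidableEq F] (M : Matrix (Fin n) (Fin n) F) (hM : IsUnit M) :
    sInf {k : ℕ | ∃ x : Fin n → F, x ≠ 0 ∧
        k = hammingNorm x + hammingNorm (M.mulVec x)} =
    sInf {k : ℕ | ∃ x : Fin n → F, x ≠ 0 ∧ 1 ≤ hammingNorm x ∧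
        hammingNorm x ≤ (n + 1) / 2 ∧
        k = min (hammingNorm x + hammingNorm (M.mulVec x))
                (hammingNorm x + hammingNorm (M⁻¹.mulVec x))} :=
  branch_number_half_weight_general n F M hM
end

section
/- For an invertible matrix M of size n over F_q, the branch number B(M) equals the minimum over k = 1,...,⌊(n+1)/2⌋ and x ∈ S_k of min(w(x) + w(Mx), w(x) + w(M⁻¹x)), where S_k is the set of weight-k vectors whose first nonzero coordinate is 1. -/
/-!
Each value `min (w x + w (M x)) (w x + w (M⁻¹ x))` is itself a value `w v + w (M v)`, with
`v = x` or `v = M⁻¹ x`, so the right-hand minimum is at least `B(M)`. Conversely, let `x`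
attain `B(M)`. A unit vector shows `B(M) ≤ n + 1`, so the lighter of `x` and `M x` has weight
at most `(n + 1) / 2`; scaling it so that its first nonzero coordinate is `1` changes no weight,
and it gives a representative whose value is at most `B(M)`.
-/

/-- `x` has first nonzero coordinate equal to `1`. -/
def FirstNonzeroOne {n : ℕ} {F : Type*} [Field F] (x : Fin n → F) : Prop :=
  ∃ t : Fin n, x t = 1 ∧ ∀ s : Fin n, s < t → x s = 0

theorem csInf_eq_csInf_of_subset_of_exists_le {α : Type*} [ConditionallyCompleteLinearOrderBot α]
    [WellFoundedLT α] {S T : Set α} (hTS : T ⊆ S)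
    (h : S.Nonempty → ∃ t ∈ T, t ≤ sInf S) :
    sInf S = sInf T := by
  rcases S.eq_empty_or_nonempty with rfl | hS
  · rw [Set.subset_empty_iff.mp hTS]
  obtain ⟨t, ht, hle⟩ := h hS
  exact le_antisymm (csInf_le' (hTS (csInf_mem ⟨t, ht⟩))) ((csInf_le' ht).trans hle)

theorem hammingNorm_smul_of_ne_zero {ι K : Type*} [Fintype ι] [DivisionRing K] [DecidableEq K]
    {c : K} (hc : c ≠ 0) (x : ι → K) : hammingNorm (c • x) = hammingNorm x :=
  hammingNorm_smul (fun _ => (isUnit_iff_ne_zero.mpr hc).isSMulRegular K) x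

theorem hammingNorm_single_one {ι K : Type*} [Fintype ι] [DecidableEq ι] [Zero K] [One K]
    [NeZero (1 : K)] [DecidableEq K] (i : ι) : hammingNorm (Pi.single i 1 : ι → K) = 1 := by
  simp [hammingNorm, Pi.single_apply, Finset.filter_eq']

namespace Matrix

variable {ι α : Type*} [Fintype ι] [DecidableEq ι] [CommRing α] {M : Matrix ι ι α}

theorem mulVec_nonsing_inv_mulVec (hM : IsUnit M) (v : ι → α) : M *ᵥ (M⁻¹ *ᵥ v) = v := by
  rw [mulVec_mulVec, mul_nonsing_inv M ((isUnit_iff_isUnit_det M).mp hM), one_mulVec]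

theorem nonsing_inv_mulVec_mulVec (hM : IsUnit M) (v : ι → α) : M⁻¹ *ᵥ (M *ᵥ v) = v := by
  rw [mulVec_mulVec, nonsing_inv_mul M ((isUnit_iff_isUnit_det M).mp hM), one_mulVec]

theorem mulVec_ne_zero_of_isUnit_s8 (hM : IsUnit M) {v : ι → α} (hv : v ≠ 0) : M *ᵥ v ≠ 0 :=
  fun h => hv (by rw [← nonsing_inv_mulVec_mulVec hM v, h, mulVec_zero])

end Matrix

open Matrix

theorem sInf_hammingNorm_add_hammingNorm_mulVec_le {ι K : Type*} [Fintype ι] [DecidableEq ι]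
    [Nonempty ι] [Semiring K] [Nontrivial K] [DecidableEq K] (M : Matrix ι ι K) :
    sInf {m : ℕ | ∃ x : ι → K, x ≠ 0 ∧ m = hammingNorm x + hammingNorm (M *ᵥ x)} ≤
      Fintype.card ι + 1 := by
  let e : ι → K := Pi.single (Classical.arbitrary ι) 1
  calc _ ≤ hammingNorm e + hammingNorm (M *ᵥ e) :=
        Nat.sInf_le (Set.mem_ofPred.mpr ⟨e, by simp [e], rfl⟩)
    _ ≤ 1 + Fintype.card ι :=
        add_le_add (hammingNorm_single_one _).le hammingNorm_le_card_fintype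
    _ = Fintype.card ι + 1 := add_comm _ _

theorem exists_smul_firstNonzeroOne {n : ℕ} {F : Type*} [Field F] {x : Fin n → F}
    (hx : x ≠ 0) :
    ∃ c : F, c ≠ 0 ∧ FirstNonzeroOne (c • x) := by
  obtain ⟨t, hxt, hmin⟩ := WellFounded.has_min wellFounded_lt {i | x i ≠ 0}
    (Function.ne_iff.mp hx)
  refine ⟨(x t)⁻¹, inv_ne_zero hxt, t, inv_mul_cancel₀ hxt, fun s hs => ?_⟩
  have : x s = 0 := by_contra fun hxs => hmin s hxs hs
  simp [this]

theorem exists_firstNonzeroOne_min_le {n : ℕ} {F : Type*} [Field F] [DecidableEq F]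
    {M : Matrix (Fin n) (Fin n) F} (hM : IsUnit M) {x : Fin n → F} (hx : x ≠ 0) :
    ∃ y : Fin n → F, FirstNonzeroOne y ∧
      hammingNorm y = min (hammingNorm x) (hammingNorm (M *ᵥ x)) ∧
      min (hammingNorm y + hammingNorm (M *ᵥ y)) (hammingNorm y + hammingNorm (M⁻¹ *ᵥ y)) ≤
        hammingNorm x + hammingNorm (M *ᵥ x) := by
  rcases le_total (hammingNorm x) (hammingNorm (M *ᵥ x)) with hle | hle
  · obtain ⟨c, hc, hy⟩ := exists_smul_firstNonzeroOne hx
    refine ⟨c • x, hy, by rw [hammingNorm_smul_of_ne_zero hc, min_eq_left hle],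
      min_le_of_left_le ?_⟩
    rw [mulVec_smul, hammingNorm_smul_of_ne_zero hc, hammingNorm_smul_of_ne_zero hc]
  · obtain ⟨c, hc, hy⟩ := exists_smul_firstNonzeroOne (mulVec_ne_zero_of_isUnit_s8 hM hx)
    refine ⟨c • M *ᵥ x, hy, by rw [hammingNorm_smul_of_ne_zero hc, min_eq_right hle],
      min_le_of_right_le ?_⟩
    rw [mulVec_smul, hammingNorm_smul_of_ne_zero hc, hammingNorm_smul_of_ne_zero hc,
      nonsing_inv_mulVec_mulVec hM, add_comm]

theorem branch_number_representatives_general (n : ℕ) (F : Type*) [Field F]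
    [DecidableEq F] (M : Matrix (Fin n) (Fin n) F) (hM : IsUnit M) :
    sInf {m : ℕ | ∃ x : Fin n → F, x ≠ 0 ∧
        m = hammingNorm x + hammingNorm (M.mulVec x)} =
    sInf {m : ℕ | ∃ k : ℕ, 1 ≤ k ∧ k ≤ (n + 1) / 2 ∧ ∃ x : Fin n → F,
        hammingNorm x = k ∧ FirstNonzeroOne x ∧
        m = min (hammingNorm x + hammingNorm (M.mulVec x))
                (hammingNorm x + hammingNorm (M⁻¹.mulVec x))} := by
  apply csInf_eq_csInf_of_subset_of_exists_le
  · rintro _ ⟨k, hk, -, x, rfl, -, rfl⟩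
    have hx : x ≠ 0 := hammingNorm_pos_iff.mp hk
    rcases min_choice (hammingNorm x + hammingNorm (M *ᵥ x))
      (hammingNorm x + hammingNorm (M⁻¹ *ᵥ x)) with h | h <;> rw [h]
    · exact ⟨x, hx, rfl⟩
    · refine ⟨M⁻¹ *ᵥ x, mulVec_ne_zero_of_isUnit_s8 (isUnit_nonsing_inv_iff.mpr hM) hx, ?_⟩
      rw [mulVec_nonsing_inv_mulVec hM, add_comm]
  · intro hL
    obtain ⟨x, hx, hmin⟩ := Nat.sInf_mem hL
    have : Nonempty (Fin n) := ⟨(Function.ne_iff.mp hx).choose⟩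
    have hbound := sInf_hammingNorm_add_hammingNorm_mulVec_le M
    rw [hmin, Fintype.card_fin] at hbound
    obtain ⟨y, hy, hwy, hle⟩ := exists_firstNonzeroOne_min_le hM hx
    have hxpos := hammingNorm_pos_iff.mpr hx
    have hMxpos := hammingNorm_pos_iff.mpr (mulVec_ne_zero_of_isUnit_s8 hM hx)
    refine ⟨_, ⟨hammingNorm y, ?_, ?_, y, rfl, hy, rfl⟩, hmin ▸ hle⟩
    all_goals omega

/-- The branch number equals the minimum over representatives `x ∈ S_k`,
`k = 1, …, ⌊(n+1)/2⌋`, of `min(w(x)+w(Mx), w(x)+w(M⁻¹x))`. -/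
theorem branch_number_representatives (n : ℕ) (hn : 1 ≤ n) (F : Type*) [Field F]
    [Fintype F] [DecidableEq F] (M : Matrix (Fin n) (Fin n) F) (hM : IsUnit M) :
    sInf {m : ℕ | ∃ x : Fin n → F, x ≠ 0 ∧
        m = hammingNorm x + hammingNorm (M.mulVec x)} =
    sInf {m : ℕ | ∃ k : ℕ, 1 ≤ k ∧ k ≤ (n + 1) / 2 ∧ ∃ x : Fin n → F,
        hammingNorm x = k ∧ FirstNonzeroOne x ∧
        m = min (hammingNorm x + hammingNorm (M.mulVec x))
                (hammingNorm x + hammingNorm (M⁻¹.mulVec x))} :=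
  branch_number_representatives_general n F M hM
end

section
/- For integers n ≥ 1 and q ≥ 4, 2n·∑_{k=1}^{⌊(n+1)/2⌋} C(n,k)·(k-1)·(q-1)^{k-1} < 2^{n + 3/2} · n^{3/2} · (q-1)^{(n-1)/2}. -/
/-!
Every binomial coefficient is at most the middle one `C(n, ⌊n/2⌋)`, every factor `k - 1` is at
most `m = ⌊(n+1)/2⌋ - 1`, and for `r = q - 1 ≥ 3` the geometric sum `∑_{k ≤ m} r^k` is at most
`(3/2) r^m`. So the left side is at most `3 n m C(n, ⌊n/2⌋) r^m`, where `r^m ≤ r^{(n-1)/2}`,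
`3m < 2n < 2^{3/2} n`, and `√n · C(n, ⌊n/2⌋) ≤ 2^n` by the Wallis-type estimate
`(3m+1) C(2m, m)² ≤ 16^m`.
-/

open Finset

/-- The weight `3n + 1`, not `n`, is what makes the induction close: the ratio of consecutive
terms is `4 (3n + 4)(2n + 1)² / ((3n + 1)(n + 1)²) ≤ 16`. -/
theorem Nat.mul_centralBinom_sq_le (n : ℕ) : (3 * n + 1) * centralBinom n ^ 2 ≤ 16 ^ n := by
  induction n with
  | zero => simp
  | succ n ih =>
    have hrec : (n + 1) ^ 2 * centralBinom (n + 1) ^ 2 =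
        4 * (2 * n + 1) ^ 2 * centralBinom n ^ 2 := by
      rw [← mul_pow, succ_mul_centralBinom_succ]; ring
    refine Nat.le_of_mul_le_mul_left ?_ (show 0 < (n + 1) ^ 2 by positivity)
    calc (n + 1) ^ 2 * ((3 * (n + 1) + 1) * centralBinom (n + 1) ^ 2)
        = (3 * n + 4) * (4 * (2 * n + 1) ^ 2) * centralBinom n ^ 2 := by
          rw [mul_left_comm, hrec]; ring
      _ ≤ 16 * (n + 1) ^ 2 * (3 * n + 1) * centralBinom n ^ 2 := by gcongr ?_ * _; nlinarith
      _ ≤ 16 * (n + 1) ^ 2 * 16 ^ n := by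
          rw [mul_assoc _ (3 * n + 1)]; exact Nat.mul_le_mul_left _ ih
      _ = (n + 1) ^ 2 * 16 ^ (n + 1) := by ring

theorem Nat.two_mul_choose_two_mul_add_one (m : ℕ) :
    2 * (2 * m + 1).choose m = centralBinom (m + 1) := by
  rw [centralBinom_eq_two_mul_choose, show 2 * (m + 1) = 2 * m + 1 + 1 by ring,
    choose_succ_succ, choose_symm_half]
  ring

theorem Nat.mul_choose_half_sq_le (n : ℕ) : n * n.choose (n / 2) ^ 2 ≤ 4 ^ n := by
  obtain ⟨m, rfl | rfl⟩ := n.even_or_odd'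
  · rw [Nat.mul_div_cancel_left m two_pos, ← centralBinom_eq_two_mul_choose, pow_mul]
    calc 2 * m * centralBinom m ^ 2 ≤ (3 * m + 1) * centralBinom m ^ 2 := by gcongr; omega
      _ ≤ 16 ^ m := mul_centralBinom_sq_le m
  · have hhalf : (2 * m + 1) / 2 = m := by omega
    rw [hhalf, ← Nat.mul_le_mul_left_iff (show 0 < 4 by norm_num)]
    calc 4 * ((2 * m + 1) * (2 * m + 1).choose m ^ 2)
        = (2 * m + 1) * centralBinom (m + 1) ^ 2 := by
          rw [← two_mul_choose_two_mul_add_one]; ring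
      _ ≤ (3 * (m + 1) + 1) * centralBinom (m + 1) ^ 2 := by gcongr ?_ * _; omega
      _ ≤ 16 ^ (m + 1) := mul_centralBinom_sq_le (m + 1)
      _ = 4 * 4 ^ (2 * m + 1) := by rw [pow_succ, pow_succ, pow_mul]; ring

theorem Nat.choose_half_mul_sqrt_le (n : ℕ) : (n.choose (n / 2) : ℝ) * √n ≤ 2 ^ n := by
  refine (pow_le_pow_iff_left₀ (by positivity) (by positivity) two_ne_zero).mp ?_
  rw [mul_pow, Real.sq_sqrt n.cast_nonneg, ← pow_mul, mul_comm n 2, pow_mul]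
  rw [mul_comm, show (2 : ℝ) ^ 2 = 4 by norm_num]
  exact_mod_cast mul_choose_half_sq_le n

theorem two_mul_sum_Icc_pow_le {r : ℕ} (hr : 3 ≤ r) (m : ℕ) :
    2 * ∑ k ∈ Icc 1 (m + 1), r ^ (k - 1) ≤ 3 * r ^ m := by
  induction m with
  | zero => simp
  | succ m ih =>
    rw [sum_Icc_succ_top (by omega), Nat.add_sub_cancel, pow_succ]
    nlinarith [Nat.zero_le (r ^ m)]

theorem two_mul_sum_choose_mul_pow_le (n m : ℕ) {r : ℕ} (hr : 3 ≤ r) :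
    2 * ∑ k ∈ Icc 1 (m + 1), n.choose k * (k - 1) * r ^ (k - 1) ≤
      3 * m * n.choose (n / 2) * r ^ m := by
  have hterm : ∑ k ∈ Icc 1 (m + 1), n.choose k * (k - 1) * r ^ (k - 1) ≤
      n.choose (n / 2) * m * ∑ k ∈ Icc 1 (m + 1), r ^ (k - 1) := by
    rw [mul_sum]
    refine sum_le_sum fun k hk => ?_
    have : k - 1 ≤ m := by simp only [mem_Icc] at hk; omega
    gcongr
    exact Nat.choose_le_middle k n
  calc 2 * ∑ k ∈ Icc 1 (m + 1), n.choose k * (k - 1) * r ^ (k - 1)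
      ≤ n.choose (n / 2) * m * (2 * ∑ k ∈ Icc 1 (m + 1), r ^ (k - 1)) := by linarith
    _ ≤ n.choose (n / 2) * m * (3 * r ^ m) := Nat.mul_le_mul_left _ (two_mul_sum_Icc_pow_le hr m)
    _ = 3 * m * n.choose (n / 2) * r ^ m := by ring

theorem Real.rpow_three_halves {x : ℝ} (hx : 0 ≤ x) : x ^ ((3 : ℝ) / 2) = x * √x := by
  rw [show (3 : ℝ) / 2 = 1 + 1 / 2 by norm_num, Real.rpow_add' hx (by norm_num), Real.rpow_one,
    Real.sqrt_eq_rpow]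

theorem mul_three_mul_choose_half_lt {n m : ℕ} (hm : 3 * m < 2 * n) :
    (n : ℝ) * (3 * m * n.choose (n / 2)) < 2 ^ ((n : ℝ) + 3 / 2) * n ^ ((3 : ℝ) / 2) := by
  have hn : (0 : ℝ) < n := by exact_mod_cast (by omega : 0 < n)
  have hm' : 3 * (m : ℝ) < 2 ^ ((3 : ℝ) / 2) * n := by
    have : (2 : ℝ) ≤ 2 ^ ((3 : ℝ) / 2) := by
      simpa using Real.rpow_le_rpow_of_exponent_le one_le_two (by norm_num : (1 : ℝ) ≤ 3 / 2)
    have : 3 * (m : ℝ) < 2 * n := by exact_mod_cast hm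
    nlinarith
  calc (n : ℝ) * (3 * m * n.choose (n / 2)) = 3 * m * √n * (n.choose (n / 2) * √n) := by
        linear_combination (3 * m * n.choose (n / 2) : ℝ) * (Real.mul_self_sqrt hn.le).symm
    _ ≤ 3 * m * √n * 2 ^ n := by gcongr; exact Nat.choose_half_mul_sqrt_le n
    _ < 2 ^ ((3 : ℝ) / 2) * n * √n * 2 ^ n := by gcongr
    _ = 2 ^ ((n : ℝ) + 3 / 2) * n ^ ((3 : ℝ) / 2) := by
        rw [Real.rpow_add two_pos, Real.rpow_natCast, Real.rpow_three_halves hn.le]; ring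

/-- For integers `n ≥ 1`, `q ≥ 4`:
`2n ∑_{k=1}^{⌊(n+1)/2⌋} C(n,k)(k-1)(q-1)^{k-1} < 2^{n+3/2} n^{3/2} (q-1)^{(n-1)/2}`. -/
theorem complexity_bound (n q : ℕ) (hn : 1 ≤ n) (hq : 4 ≤ q) :
    ((2 * n * ∑ k ∈ Finset.Icc 1 ((n + 1) / 2),
        n.choose k * (k - 1) * (q - 1) ^ (k - 1) : ℕ) : ℝ) <
      (2 : ℝ) ^ ((n : ℝ) + 3 / 2) * (n : ℝ) ^ ((3 : ℝ) / 2) *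
        ((q : ℝ) - 1) ^ (((n : ℝ) - 1) / 2) := by
  obtain ⟨m, hm⟩ : ∃ m, (n + 1) / 2 = m + 1 := ⟨(n - 1) / 2, by omega⟩
  rw [hm]
  set S := ∑ k ∈ Icc 1 (m + 1), n.choose k * (k - 1) * (q - 1) ^ (k - 1)
  have hsum : 2 * (S : ℝ) ≤ 3 * m * n.choose (n / 2) * ((q : ℝ) - 1) ^ m := by
    rw [← Nat.cast_pred (by omega)]
    exact_mod_cast two_mul_sum_choose_mul_pow_le n m (r := q - 1) (by omega)
  have hq1 : (1 : ℝ) ≤ q - 1 := by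
    have : (4 : ℝ) ≤ q := by exact_mod_cast hq
    linarith
  have hpow : ((q : ℝ) - 1) ^ m ≤ ((q : ℝ) - 1) ^ (((n : ℝ) - 1) / 2) := by
    have : (2 * m + 1 : ℝ) ≤ n := by exact_mod_cast (by omega : 2 * m + 1 ≤ n)
    rw [← Real.rpow_natCast]
    exact Real.rpow_le_rpow_of_exponent_le hq1 (by linarith)
  calc ((2 * n * S : ℕ) : ℝ) = n * (2 * S) := by push_cast; ring
    _ ≤ n * (3 * m * n.choose (n / 2) * ((q : ℝ) - 1) ^ (((n : ℝ) - 1) / 2)) :=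
        mul_le_mul_of_nonneg_left (hsum.trans (by gcongr)) n.cast_nonneg
    _ = n * (3 * m * n.choose (n / 2)) * ((q : ℝ) - 1) ^ (((n : ℝ) - 1) / 2) := by ring
    _ < _ := mul_lt_mul_of_pos_right (mul_three_mul_choose_half_lt (by omega))
        (Real.rpow_pos_of_pos (by linarith) _)
end

section
/- For a 2^m × 2^m Hadamard-type matrix M over a field of characteristic 2 (recursively of the form [[U,V],[V,U]] with U,V Hadamard-type), M² = c²·I where c is the sum of the entries in the first row of M. -/
/-- The canonical equivalence `Fin (2^m) ⊕ Fin (2^m) ≃ Fin (2^(m+1))`. -/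
def hadamardEquiv (m : ℕ) : Fin (2 ^ m) ⊕ Fin (2 ^ m) ≃ Fin (2 ^ (m + 1)) :=
  finSumFinEquiv.trans (finCongr (by rw [pow_succ]; ring))

/-- Hadamard-type matrices: `1×1` matrices, and block matrices `[[U,V],[V,U]]`
with `U`, `V` Hadamard-type. -/
inductive IsHadamardType (F : Type*) [Field F] :
    (m : ℕ) → Matrix (Fin (2 ^ m)) (Fin (2 ^ m)) F → Prop
  | base (M : Matrix (Fin (2 ^ 0)) (Fin (2 ^ 0)) F) : IsHadamardType F 0 M
  | step {m : ℕ} (U V : Matrix (Fin (2 ^ m)) (Fin (2 ^ m)) F) :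
      IsHadamardType F m U → IsHadamardType F m V →
      IsHadamardType F (m + 1)
        ((Matrix.reindex (hadamardEquiv m) (hadamardEquiv m))
          (Matrix.fromBlocks U V V U))

/-!
Hadamard-type matrices of equal size commute pairwise (induction on both). Hence the square of
`[[U, V], [V, U]]` is `[[U² + V², UV + VU], [UV + VU, U² + V²]]`, whose off-diagonal blocks are
`2UV = 0` in characteristic 2. By induction `U² + V² = (a² + b²) • 1` with `a`, `b` the first-row
sums of `U`, `V`, and `a² + b² = (a + b)²` by the Frobenius, where `a + b` is the first-row sum
of the block matrix.
-/

open Matrix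

namespace Matrix

variable {n o p R : Type*}

theorem eq_smul_one_of_subsingleton [Fintype n] [DecidableEq n] [Subsingleton n] [Semiring R]
    (M : Matrix n n R) (i : n) : M = M i i • 1 := by
  ext j k
  rw [Subsingleton.elim j i, Subsingleton.elim k i]
  simp

theorem sum_reindex_fromBlocks_apply_inl [Fintype n] [Fintype o] [Fintype p] [AddCommMonoid R]
    (e : n ⊕ o ≃ p) (A : Matrix n n R) (B : Matrix n o R) (C : Matrix o n R) (D : Matrix o o R)
    (i : n) : ∑ j, reindex e e (fromBlocks A B C D) (e (.inl i)) j = ∑ j, A i j + ∑ j, B i j := by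
  rw [← e.sum_comp, Fintype.sum_sum_type]
  simp

theorem fromBlocks_commute [Fintype n] [Semiring R] {A B A' B' : Matrix n n R}
    (hAA' : Commute A A') (hAB' : Commute A B') (hBA' : Commute B A') (hBB' : Commute B B') :
    Commute (fromBlocks A B B A) (fromBlocks A' B' B' A') := by
  simp only [Commute, SemiconjBy, fromBlocks_multiply, hAA'.eq, hAB'.eq, hBA'.eq, hBB'.eq]
  rw [add_comm (A' * B), add_comm (A' * A)]

theorem fromBlocks_mul_self_of_commute [Fintype n] [CommRing R] [CharP R 2] {A B : Matrix n n R}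
    (h : Commute A B) :
    fromBlocks A B B A * fromBlocks A B B A = fromBlocks (A * A + B * B) 0 0 (A * A + B * B) := by
  have hcancel (X : Matrix n n R) : X + X = 0 := by
    rw [← two_smul R, CharTwo.two_eq_zero, zero_smul]
  rw [fromBlocks_multiply, h.eq, hcancel, add_comm (B * B)]

end Matrix

namespace IsHadamardType

variable {F : Type*} [Field F]

instance : Subsingleton (Fin (2 ^ 0)) := Fin.subsingleton_one

theorem commute {m : ℕ} {M N : Matrix (Fin (2 ^ m)) (Fin (2 ^ m)) F}
    (hM : IsHadamardType F m M) (hN : IsHadamardType F m N) : Commute M N := by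
  induction hM with
  | base M =>
    rw [M.eq_smul_one_of_subsingleton 0, N.eq_smul_one_of_subsingleton 0]
    exact ((Commute.one_left (1 : Matrix _ _ F)).smul_left _).smul_right _
  | step U V hU hV ihU ihV =>
    cases hN with
    | step U' V' hU' hV' =>
      simp only [← coe_reindexAlgEquiv F F]
      exact (fromBlocks_commute (ihU hU') (ihU hV') (ihV hU') (ihV hV')).map _

theorem mul_self [CharP F 2] {m : ℕ} {M : Matrix (Fin (2 ^ m)) (Fin (2 ^ m)) F}
    (hM : IsHadamardType F m M) :
    M * M = (∑ j, M ⟨0, Nat.two_pow_pos m⟩ j) ^ 2 • 1 := by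
  induction hM with
  | base M =>
    rw [Fintype.sum_subsingleton _ 0, M.eq_smul_one_of_subsingleton 0]
    simp [sq, smul_smul]
  | @step m U V hU hV ihU ihV =>
    have hzero : (⟨0, Nat.two_pow_pos (m + 1)⟩ : Fin (2 ^ (m + 1))) =
        hadamardEquiv m (.inl ⟨0, Nat.two_pow_pos m⟩) := rfl
    rw [hzero, sum_reindex_fromBlocks_apply_inl, CharTwo.add_sq, ← coe_reindexAlgEquiv F F,
      ← map_mul, fromBlocks_mul_self_of_commute (hU.commute hV), ihU, ihV, ← add_smul,
      ← map_one (reindexAlgEquiv F F (hadamardEquiv m)), ← map_smul, ← fromBlocks_one,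
      fromBlocks_smul, smul_zero]

end IsHadamardType

/-- For a Hadamard-type matrix over a field of characteristic 2, `M² = c² • 1`,
where `c` is the sum of the entries in the first row of `M`. -/
theorem hadamard_sq (F : Type*) [Field F] [CharP F 2] (m : ℕ)
    (M : Matrix (Fin (2 ^ m)) (Fin (2 ^ m)) F) (hM : IsHadamardType F m M)
    (c : F) (hc : c = ∑ j, M ⟨0, Nat.two_pow_pos m⟩ j) :
    M * M = c ^ 2 • (1 : Matrix (Fin (2 ^ m)) (Fin (2 ^ m)) F) :=
  hc ▸ hM.mul_self
end
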